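/- Any triangular prism (the convex hull of a triangle T and a translate T + v, where v is not parallel to the plane of T) is 5-equiprojective: every orthogonal projection in a direction not parallel to any of its faces is a pentagon. -/

import Mathlib

/-
Project along `d` onto the plane `dᗮ`. The base triangle is a face, so its image `p q r` is
again a triangle, and the shadow is the convex hull of `p, q, r, p + w, q + w, r + w` with
`w` the image of `v`. Writing `w = α (q - p) + β (r - p)`, the three lateral faces not being
parallel to `d` say that `w` is parallel to no edge of the triangle: `α`, `β`, `α + β` are all
nonzero. Relabelling the vertices and exchanging the two triangles (`x ↦ x + w`, `w ↦ -w`)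
reduces to `α, β > 0`. Then `p + w` is a convex combination of `p`, `q + w`, `r + w`, while each
of the other five points is the unique maximiser of a linear functional.
-/

/-- A face of a convex polyhedron: a two-dimensional exposed face. -/
def IsFaceOf (P F : Set (EuclideanSpace ℝ (Fin 3))) : Prop :=
  IsExposed ℝ P F ∧ Module.finrank ℝ (vectorSpan ℝ F) = 2

noncomputable def shadow (P : Set (EuclideanSpace ℝ (Fin 3)))
    (d : EuclideanSpace ℝ (Fin 3)) : Set ((ℝ ∙ d)ᗮ : Submodule ℝ _) :=
  (Submodule.orthogonalProjectionOnto (ℝ ∙ d)ᗮ) '' P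

def IsKGon {V : Type*} [AddCommGroup V] [Module ℝ V] (k : ℕ) (A : Set V) : Prop :=
  (A.extremePoints ℝ).ncard = k


open Set

section ConvexGeometry

variable {V : Type*} [AddCommGroup V] [Module ℝ V]

theorem mem_convexHull_of_mem_convexHull_union_of_le (ℓ : V →ₗ[ℝ] ℝ) {s u : Set V} {M : ℝ}
    (hs : ∀ x ∈ s, ℓ x = M) (hu : ∀ y ∈ u, ℓ y < M) {z : V} (hz : z ∈ convexHull ℝ (s ∪ u))
    (hMz : M ≤ ℓ z) : z ∈ convexHull ℝ s := by
  rcases u.eq_empty_or_nonempty with rfl | hu'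
  · simpa using hz
  have hlt : convexHull ℝ u ⊆ {y | ℓ y < M} :=
    convexHull_min hu (convex_halfSpace_lt ℓ.isLinear M)
  rcases s.eq_empty_or_nonempty with rfl | hs'
  · rw [empty_union] at hz
    exact absurd hMz (not_le.2 (hlt hz))
  rw [convexHull_union hs' hu', mem_convexJoin] at hz
  obtain ⟨x, hx, y, hy, a, b, ha, hb, hab, rfl⟩ := hz
  have hx' : ℓ x = M := convexHull_min hs (convex_hyperplane ℓ.isLinear M) hx
  have hy' : ℓ y < M := hlt hy
  have hcomb : ℓ (a • x + b • y) = M - b * (M - ℓ y) := by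
    rw [map_add, map_smul, map_smul, hx', smul_eq_mul, smul_eq_mul]
    linear_combination M * hab
  obtain rfl : b = 0 := le_antisymm (by nlinarith) hb
  simpa [show a = 1 by linarith] using hx

theorem mem_extremePoints_convexHull_of_forall_lt (ℓ : V →ₗ[ℝ] ℝ) {s : Set V} {x : V}
    (hx : x ∈ s) (h : ∀ y ∈ s, y ≠ x → ℓ y < ℓ x) : x ∈ (convexHull ℝ s).extremePoints ℝ := by
  have hlt : convexHull ℝ s \ {x} ⊆ {y | ℓ y < ℓ x} := by
    rintro z ⟨hz, hzx⟩
    show ℓ z < ℓ x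
    by_contra! hle
    rw [← union_sdiff_cancel (singleton_subset_iff.2 hx)] at hz
    have := mem_convexHull_of_mem_convexHull_union_of_le ℓ (s := {x}) (u := s \ {x}) (by simp)
      (fun y hy => h y hy.1 hy.2) hz hle
    exact hzx (by simpa using this)
  rw [(convex_convexHull ℝ s).mem_extremePoints_iff_mem_sdiff_convexHull_sdiff]
  exact ⟨subset_convexHull ℝ s hx,
    fun hmem => lt_irrefl (ℓ x) (convexHull_min hlt (convex_halfSpace_lt ℓ.isLinear _) hmem)⟩

theorem ncard_extremePoints_convexHull_range {ι : Type*} (v : ι → V) (ℓ : ι → V →ₗ[ℝ] ℝ)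
    (h : ∀ i j, j ≠ i → ℓ i (v j) < ℓ i (v i)) :
    ((convexHull ℝ (range v)).extremePoints ℝ).ncard = Nat.card ι := by
  have hinj : Function.Injective v := fun i j hij => by
    by_contra hne
    exact (h i j (Ne.symm hne)).ne (congrArg (ℓ i) hij.symm)
  suffices (convexHull ℝ (range v)).extremePoints ℝ = range v by
    rw [this, ncard_range_of_injective hinj]
  refine extremePoints_convexHull_subset.antisymm ?_
  rintro _ ⟨i, rfl⟩
  refine mem_extremePoints_convexHull_of_forall_lt (ℓ i) (mem_range_self i) ?_
  rintro _ ⟨j, rfl⟩ hji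
  exact h i j (ne_of_apply_ne v hji)

theorem add_mem_convexHull_triangle {p q r w : V} {α β : ℝ} (hα : 0 ≤ α) (hβ : 0 ≤ β)
    (hw : w = α • (q - p) + β • (r - p)) : p + w ∈ convexHull ℝ {p, q + w, r + w} := by
  have hD : 0 < 1 + α + β := by linarith
  convert (convex_convexHull ℝ {p, q + w, r + w}).sum_mem (t := Finset.univ)
    (w := ![1 / (1 + α + β), α / (1 + α + β), β / (1 + α + β)])
    (z := ![p, q + w, r + w]) ?_ ?_ ?_ using 1
  · simp [Fin.sum_univ_three, hw]
    match_scalars <;> field_simp <;> ring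
  · intro i _
    fin_cases i <;> simp <;> positivity
  · simp [Fin.sum_univ_three]
    field_simp
  · intro i _
    fin_cases i <;> exact subset_convexHull ℝ _ (by simp)

end ConvexGeometry

section LinearAlgebra

variable {K V : Type*} [Field K] [AddCommGroup V] [Module K V] {x y v : V}

theorem LinearMap.exists_eq_one_eq_zero (hx : x ∉ K ∙ y) :
    ∃ f : V →ₗ[K] K, f x = 1 ∧ f y = 0 := by
  obtain ⟨f, hf, hfx⟩ := LinearMap.exists_extend_of_notMem (0 : (K ∙ y) →ₗ[K] K) hx 1
  exact ⟨f, hfx, by simpa using LinearMap.congr_fun hf ⟨y, Submodule.mem_span_singleton_self y⟩⟩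

theorem LinearIndependent.notMem_span_singleton (h : LinearIndependent K ![x, y]) :
    x ∉ K ∙ y := fun hx => by
  obtain ⟨a, ha⟩ := Submodule.mem_span_singleton.1 hx
  exact (linearIndependent_fin2.1 h).2 a (by simpa using ha)

theorem LinearIndependent.exists_dual_pair (h : LinearIndependent K ![x, y]) :
    ∃ f g : V →ₗ[K] K, f x = 1 ∧ f y = 0 ∧ g x = 0 ∧ g y = 1 := by
  obtain ⟨f, hfx, hfy⟩ := LinearMap.exists_eq_one_eq_zero h.notMem_span_singleton
  obtain ⟨g, hgy, hgx⟩ :=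
    LinearMap.exists_eq_one_eq_zero (LinearIndependent.pair_symm_iff.1 h).notMem_span_singleton
  exact ⟨f, g, hfx, hfy, hgx, hgy⟩

theorem LinearIndependent.pair_left_of_notMem_span (h : LinearIndependent K ![x, y])
    (hv : v ∉ Submodule.span K {x, y}) : LinearIndependent K ![x, v] := by
  rw [LinearIndependent.pair_iff' (by simpa using h.ne_zero 0)]
  rintro a rfl
  exact hv (Submodule.smul_mem _ a (Submodule.subset_span (mem_insert x _)))

theorem LinearIndependent.notMem_span_pair_of_notMem_span (h : LinearIndependent K ![x, y])
    (hv : v ∉ Submodule.span K {x, y}) : y ∉ Submodule.span K {x, v} := fun hy => by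
  rw [pair_comm] at hy hv
  exact hv (mem_span_insert_exchange hy (LinearIndependent.pair_symm_iff.1 h).notMem_span_singleton)

theorem LinearIndependent.finrank_span_pair (h : LinearIndependent K ![x, y]) :
    Module.finrank K (Submodule.span K {x, y}) = 2 := by
  rw [← Matrix.range_cons_cons_empty, finrank_span_eq_card h, Fintype.card_fin]

theorem LinearIndependent.mem_span_pair_of_finrank_eq_two (h : LinearIndependent K ![x, y])
    (hV : Module.finrank K V = 2) (z : V) : z ∈ Submodule.span K {x, y} := by
  have := Module.finite_of_finrank_pos (R := K) (M := V) (by omega)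
  rw [← Matrix.range_cons_cons_empty,
    h.span_eq_top_of_card_eq_finrank' (by rw [Fintype.card_fin, hV])]
  trivial

theorem LinearIndependent.sub_pair_rebase {p q r : V} (h : LinearIndependent K ![q - p, r - p]) :
    LinearIndependent K ![p - q, r - q] := by
  rw [LinearIndependent.pair_iff] at h ⊢
  intro s t hst
  obtain ⟨hst', rfl⟩ := h (-s - t) t (by rw [← hst]; module)
  exact ⟨by simpa using hst', rfl⟩

theorem linearIndependent_sub_of_not_collinear {p q r : V} (h : ¬Collinear K {p, q, r}) :
    LinearIndependent K ![q - p, r - p] := by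
  rw [LinearIndependent.pair_iff' (sub_ne_zero.2 (ne₁₂_of_not_collinear h).symm)]
  intro a ha
  have hr : r ∈ line[K, p, q] := by
    convert AffineMap.lineMap_mem_affineSpan_pair a p q using 1
    rw [AffineMap.lineMap_apply, vsub_eq_sub, vadd_eq_add, ha, sub_add_cancel]
  apply h
  rw [pair_comm, insert_comm]
  exact collinear_insert_of_mem_affineSpan_pair hr

end LinearAlgebra

section VectorSpan

variable {k V : Type*} [Ring k] [AddCommGroup V] [Module k V]

theorem vectorSpan_convexHull [PartialOrder k] [IsOrderedRing k] (s : Set V) :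
    vectorSpan k (convexHull k s) = vectorSpan k s := by
  rw [← direction_affineSpan, affineSpan_convexHull, direction_affineSpan]

theorem vectorSpan_triangle (p q r : V) :
    vectorSpan k {p, q, r} = Submodule.span k {q - p, r - p} := by
  rw [vectorSpan_eq_span_vsub_set_right k (mem_insert p _)]
  simp [image_insert_eq, Submodule.span_insert_zero]

theorem vectorSpan_parallelogram (p q v : V) :
    vectorSpan k {p, q, p + v, q + v} = Submodule.span k {q - p, v} := by
  rw [vectorSpan_eq_span_vsub_set_right k (mem_insert p _)]
  simp only [image_insert_eq, image_singleton, vsub_eq_sub, sub_self, Submodule.span_insert_zero,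
    add_sub_cancel_left]
  rw [pair_comm v, insert_comm]
  exact Submodule.span_insert_eq_span
    (Submodule.mem_span_pair.2 ⟨1, 1, by rw [one_smul, one_smul]; abel⟩)

end VectorSpan

section Prism

variable {V : Type*} [AddCommGroup V] [Module ℝ V] {p q r w : V} {α β : ℝ}

theorem ncard_extremePoints_prism_of_pos (hpqr : LinearIndependent ℝ ![q - p, r - p])
    (hα : 0 < α) (hβ : 0 < β) (hw : w = α • (q - p) + β • (r - p)) :
    ((convexHull ℝ ({p, q, r} ∪ (· + w) '' {p, q, r})).extremePoints ℝ).ncard = 5 := by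
  obtain ⟨f, g, hfq, hfr, hgq, hgr⟩ := hpqr.exists_dual_pair
  have hfw : f w = α := by simp [hw, hfq, hfr]
  have hgw : g w = β := by simp [hw, hgq, hgr]
  rw [map_sub] at hfq hfr hgq hgr
  set v : Fin 5 → V := ![p, q, r, q + w, r + w] with hv
  have hpw : p + w ∈ convexHull ℝ (range v) :=
    convexHull_mono (by simp [insert_subset_iff, hv]) (add_mem_convexHull_triangle hα.le hβ.le hw)
  have hhull : convexHull ℝ ({p, q, r} ∪ (· + w) '' {p, q, r}) = convexHull ℝ (range v) := by
    refine (convexHull_min ?_ (convex_convexHull ℝ _)).antisymm (convexHull_mono ?_)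
    · refine subset_trans ?_ (insert_subset hpw (subset_convexHull ℝ _))
      simp [image_insert_eq, insert_subset_iff, hv]
    · simp [image_insert_eq, insert_subset_iff, hv]
  -- In the coordinates `(f, g)`, up to translation, `v` is
  -- `(0, 0), (1, 0), (0, 1), (1 + α, β), (α, 1 + β)`.
  rw [hhull, ncard_extremePoints_convexHull_range v
    ![-f - g, β • f - (1 + α) • g, α • g - (1 + β) • f, (2 : ℝ) • f + g, f + (2 : ℝ) • g]]
  · simp
  · intro i j hij
    fin_cases i <;> fin_cases j <;> simp [hv, hfw, hgw] at hij ⊢ <;> nlinarith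

theorem ncard_extremePoints_prism_of_mul_pos (hpqr : LinearIndependent ℝ ![q - p, r - p])
    (hαβ : 0 < α * β) (hw : w = α • (q - p) + β • (r - p)) :
    ((convexHull ℝ ({p, q, r} ∪ (· + w) '' {p, q, r})).extremePoints ℝ).ncard = 5 := by
  rcases pos_and_pos_or_neg_and_neg_of_mul_pos hαβ with ⟨hα, hβ⟩ | ⟨hα, hβ⟩
  · exact ncard_extremePoints_prism_of_pos hpqr hα hβ hw
  have h := ncard_extremePoints_prism_of_pos (p := p + w) (q := q + w) (r := r + w) (w := -w)
    (by simpa only [add_sub_add_right_eq_sub] using hpqr) (neg_pos.2 hα) (neg_pos.2 hβ)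
    (by simp only [add_sub_add_right_eq_sub, hw]; module)
  rw [show ({p + w, q + w, r + w} : Set V) = (· + w) '' {p, q, r} by simp [image_insert_eq],
    image_image, union_comm] at h
  simpa only [add_neg_cancel_right, image_id'] using h

theorem ncard_extremePoints_prism_of_ne_zero (hpqr : LinearIndependent ℝ ![q - p, r - p])
    (hw : w = α • (q - p) + β • (r - p)) (hα : α ≠ 0) (hβ : β ≠ 0) (hαβ : α + β ≠ 0) :
    ((convexHull ℝ ({p, q, r} ∪ (· + w) '' {p, q, r})).extremePoints ℝ).ncard = 5 := by
  rcases (mul_ne_zero hα hβ).symm.lt_or_gt with hpos | hneg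
  · exact ncard_extremePoints_prism_of_mul_pos hpqr hpos hw
  -- `w = -(α + β) • p + α • q + β • r`: move the base point to the vertex whose coefficient
  -- has the sign opposite to the other two.
  have : 0 < -(α + β) * β ∨ 0 < -(α + β) * α := by
    rcases hα.lt_or_gt with hα' | hα' <;> rcases hαβ.lt_or_gt with hs | hs <;>
      first | (left; nlinarith) | (right; nlinarith)
  rcases this with h | h
  · rw [insert_comm p q]
    exact ncard_extremePoints_prism_of_mul_pos hpqr.sub_pair_rebase h (by rw [hw]; module)
  · rw [pair_comm q r, insert_comm p r]
    exact ncard_extremePoints_prism_of_mul_pos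
      (LinearIndependent.pair_symm_iff.1 hpqr).sub_pair_rebase h (by rw [hw]; module)

theorem ncard_extremePoints_prism (hpqr : LinearIndependent ℝ ![q - p, r - p])
    (hw : w ∈ Submodule.span ℝ {q - p, r - p}) (hpq : LinearIndependent ℝ ![q - p, w])
    (hpr : LinearIndependent ℝ ![r - p, w]) (hqr : LinearIndependent ℝ ![r - q, w]) :
    ((convexHull ℝ ({p, q, r} ∪ (· + w) '' {p, q, r})).extremePoints ℝ).ncard = 5 := by
  obtain ⟨α, β, rfl⟩ := Submodule.mem_span_pair.1 hw
  refine ncard_extremePoints_prism_of_ne_zero hpqr rfl ?_ ?_ ?_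
  · rintro rfl
    exact (linearIndependent_fin2.1 (LinearIndependent.pair_symm_iff.1 hpr)).2 β (by simp)
  · rintro rfl
    exact (linearIndependent_fin2.1 (LinearIndependent.pair_symm_iff.1 hpq)).2 α (by simp)
  · intro h
    refine (linearIndependent_fin2.1 (LinearIndependent.pair_symm_iff.1 hqr)).2 (-α) ?_
    rw [show β = -α by linarith]
    simp only [Matrix.cons_val_one, Matrix.cons_val_zero]
    module

end Prism

section Euclidean

open scoped RealInnerProductSpace

variable {E : Type*} [NormedAddCommGroup E] [InnerProductSpace ℝ E]

theorem isExposed_convexHull_union {s u : Set E} [(vectorSpan ℝ s).HasOrthogonalProjection]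
    {p z : E} (hp : p ∈ s) (hz : z ∉ vectorSpan ℝ s)
    (hu : ∀ y ∈ u, y - (p + z) ∈ vectorSpan ℝ s) :
    IsExposed ℝ (convexHull ℝ (s ∪ u)) (convexHull ℝ s) := by
  set W := vectorSpan ℝ s
  set m := z - W.starProjection z
  have hmW : ∀ x ∈ W, ⟪m, x⟫ = 0 := fun x hx =>
    Submodule.inner_left_of_mem_orthogonal hx (W.sub_starProjection_mem_orthogonal z)
  have hmz : 0 < ⟪m, z⟫ := by
    have hm : m ≠ 0 := sub_ne_zero.2 fun h => hz (W.starProjection_eq_self_iff.1 h.symm)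
    rw [← add_sub_cancel (W.starProjection z) z, inner_add_right,
      hmW _ (W.starProjection_apply_mem z), zero_add]
    exact real_inner_self_pos.2 hm
  set ℓ := -innerSL ℝ m
  have hs : ∀ x ∈ s, ℓ x = ℓ p := fun x hx => by
    rw [← sub_eq_zero, ← map_sub]
    simpa [ℓ] using hmW _ (vsub_mem_vectorSpan ℝ hx hp)
  have hu' : ∀ y ∈ u, ℓ y < ℓ p := fun y hy => by
    have := hmW _ (hu y hy)
    rw [inner_sub_right, inner_add_right] at this
    simp only [ℓ, neg_apply, innerSL_apply_apply]
    linarith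
  have hle : convexHull ℝ (s ∪ u) ⊆ {y | ℓ y ≤ ℓ p} :=
    convexHull_min (fun y hy => hy.elim (fun hy => (hs y hy).le) (fun hy => (hu' y hy).le))
      (convex_halfSpace_le (ℓ : E →ₗ[ℝ] ℝ).isLinear _)
  refine fun _ => ⟨ℓ, Subset.antisymm (fun x hx => ⟨convexHull_mono subset_union_left hx,
    fun y hy => ?_⟩) fun x ⟨hx, hmax⟩ => ?_⟩
  · rw [convexHull_min hs (convex_hyperplane (ℓ : E →ₗ[ℝ] ℝ).isLinear _) hx]
    exact hle hy
  · exact mem_convexHull_of_mem_convexHull_union_of_le (ℓ : E →ₗ[ℝ] ℝ) hs hu' hx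
      (hmax p (subset_convexHull ℝ _ (Or.inl hp)))

theorem linearIndependent_orthogonalProjection_pair {x y d : E}
    (hxy : LinearIndependent ℝ ![x, y]) (hd : d ∉ Submodule.span ℝ {x, y}) :
    LinearIndependent ℝ
      ![(ℝ ∙ d)ᗮ.orthogonalProjectionOnto x, (ℝ ∙ d)ᗮ.orthogonalProjectionOnto y] := by
  have := hxy.map (f := ((ℝ ∙ d)ᗮ.orthogonalProjectionOnto : E →ₗ[ℝ] (ℝ ∙ d)ᗮ)) (by
    simp only [Submodule.ker_orthogonalProjectionOnto, Submodule.orthogonal_orthogonal,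
      Matrix.range_cons_cons_empty, Submodule.disjoint_span_singleton]
    exact fun h => absurd h hd)
  rwa [show ⇑((ℝ ∙ d)ᗮ.orthogonalProjectionOnto : E →ₗ[ℝ] (ℝ ∙ d)ᗮ) ∘ ![x, y]
      = ![(ℝ ∙ d)ᗮ.orthogonalProjectionOnto x, (ℝ ∙ d)ᗮ.orthogonalProjectionOnto y] by
    ext i; fin_cases i <;> rfl] at this

end Euclidean

section TriangularPrism

local notation "E3" => EuclideanSpace ℝ (Fin 3)

variable {a b c v : E3}

theorem isFaceOf_prism_base (htri : ¬Collinear ℝ {a, b, c}) (hv : v ∉ vectorSpan ℝ {a, b, c}) :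
    IsFaceOf (convexHull ℝ ({a, b, c} ∪ (· + v) '' {a, b, c})) (convexHull ℝ {a, b, c}) := by
  refine ⟨isExposed_convexHull_union (mem_insert a _) hv ?_, ?_⟩
  · rintro _ ⟨x, hx, rfl⟩
    rw [add_sub_add_right_eq_sub]
    exact vsub_mem_vectorSpan ℝ hx (mem_insert a _)
  · rw [vectorSpan_convexHull, vectorSpan_triangle,
      (linearIndependent_sub_of_not_collinear htri).finrank_span_pair]

theorem isFaceOf_prism_side (htri : ¬Collinear ℝ {a, b, c}) (hv : v ∉ vectorSpan ℝ {a, b, c}) :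
    IsFaceOf (convexHull ℝ ({a, b, c} ∪ (· + v) '' {a, b, c}))
      (convexHull ℝ {a, b, a + v, b + v}) := by
  have hli := linearIndependent_sub_of_not_collinear htri
  rw [vectorSpan_triangle] at hv
  have hsplit : ({a, b, c} ∪ (· + v) '' {a, b, c} : Set E3)
      = {a, b, a + v, b + v} ∪ {c, c + v} := by
    ext
    simp only [image_insert_eq, image_singleton, mem_union, mem_insert_iff, mem_singleton_iff]
    tauto
  rw [hsplit]
  refine ⟨isExposed_convexHull_union (p := a) (z := c - a) (mem_insert a _) ?_ ?_, ?_⟩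
  · rw [vectorSpan_parallelogram]
    exact hli.notMem_span_pair_of_notMem_span hv
  · rw [vectorSpan_parallelogram]
    rintro y (rfl | rfl)
    · simp
    · rw [show c + v - (a + (c - a)) = v by abel]
      exact Submodule.subset_span (by simp)
  · rw [vectorSpan_convexHull, vectorSpan_parallelogram,
      (hli.pair_left_of_notMem_span hv).finrank_span_pair]

theorem finrank_orthogonal_span_singleton_eq_two {d : E3} (hd : d ≠ 0) :
    Module.finrank ℝ (ℝ ∙ d)ᗮ = 2 := by
  have : Fact (Module.finrank ℝ E3 = 2 + 1) := ⟨by simp⟩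
  exact Submodule.finrank_orthogonal_span_singleton hd

theorem linearIndependent_orthogonalProjection_prism_base {d : E3}
    (htri : ¬Collinear ℝ {a, b, c}) (hv : v ∉ vectorSpan ℝ {a, b, c})
    (hface : ∀ F, IsFaceOf (convexHull ℝ ({a, b, c} ∪ (· + v) '' {a, b, c})) F →
      d ∉ vectorSpan ℝ F) :
    LinearIndependent ℝ
      ![(ℝ ∙ d)ᗮ.orthogonalProjectionOnto (b - a), (ℝ ∙ d)ᗮ.orthogonalProjectionOnto (c - a)] := by
  refine linearIndependent_orthogonalProjection_pair
    (linearIndependent_sub_of_not_collinear htri) ?_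
  simpa only [vectorSpan_convexHull, vectorSpan_triangle] using
    hface _ (isFaceOf_prism_base htri hv)

theorem linearIndependent_orthogonalProjection_prism_side {d : E3}
    (htri : ¬Collinear ℝ {a, b, c}) (hv : v ∉ vectorSpan ℝ {a, b, c})
    (hface : ∀ F, IsFaceOf (convexHull ℝ ({a, b, c} ∪ (· + v) '' {a, b, c})) F →
      d ∉ vectorSpan ℝ F) :
    LinearIndependent ℝ
      ![(ℝ ∙ d)ᗮ.orthogonalProjectionOnto (b - a), (ℝ ∙ d)ᗮ.orthogonalProjectionOnto v] := by
  refine linearIndependent_orthogonalProjection_pair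
    ((linearIndependent_sub_of_not_collinear htri).pair_left_of_notMem_span
      (by rwa [vectorSpan_triangle] at hv)) ?_
  simpa only [vectorSpan_convexHull, vectorSpan_parallelogram] using
    hface _ (isFaceOf_prism_side htri hv)

theorem shadow_convexHull_prism (d : E3) :
    let π := (ℝ ∙ d)ᗮ.orthogonalProjectionOnto
    shadow (convexHull ℝ ({a, b, c} ∪ (· + v) '' {a, b, c})) d
      = convexHull ℝ ({π a, π b, π c} ∪ (· + π v) '' {π a, π b, π c}) := by
  refine (LinearMap.image_convexHull (ℝ ∙ d)ᗮ.orthogonalProjectionOnto.toLinearMap _).trans ?_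
  simp only [image_union, image_insert_eq, image_singleton, ContinuousLinearMap.coe_coe, map_add]

end TriangularPrism

/-- A triangular prism (the convex hull of a nondegenerate triangle `abc` and its
translate by `v`, where `v` is not parallel to the plane of the triangle) is
5-equiprojective: every orthogonal projection along a direction not parallel to any
of its faces is a pentagon. -/
theorem stmt_7 (a b c v : EuclideanSpace ℝ (Fin 3))
    (htri : ¬ Collinear ℝ ({a, b, c} : Set (EuclideanSpace ℝ (Fin 3))))
    (hv : v ∉ vectorSpan ℝ ({a, b, c} : Set (EuclideanSpace ℝ (Fin 3))))
    (P : Set (EuclideanSpace ℝ (Fin 3)))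
    (hP : P = convexHull ℝ ({a, b, c, a + v, b + v, c + v} :
      Set (EuclideanSpace ℝ (Fin 3)))) :
    ∀ d : EuclideanSpace ℝ (Fin 3), d ≠ 0 →
      (∀ F, IsFaceOf P F → d ∉ vectorSpan ℝ F) → IsKGon 5 (shadow P d) := by
  intro d hd hface
  rw [show ({a, b, c, a + v, b + v, c + v} : Set (EuclideanSpace ℝ (Fin 3)))
    = {a, b, c} ∪ (· + v) '' {a, b, c} by
      simp only [image_insert_eq, image_singleton, insert_union, singleton_union]] at hP
  subst hP
  set π := (ℝ ∙ d)ᗮ.orthogonalProjectionOnto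
  have hside : ∀ {p q r}, ({p, q, r} : Set (EuclideanSpace ℝ (Fin 3))) = {a, b, c} →
      LinearIndependent ℝ ![π q - π p, π v] := by
    intro p q r h
    rw [← h] at htri hv hface
    simpa only [map_sub] using linearIndependent_orthogonalProjection_prism_side htri hv hface
  have hbase : LinearIndependent ℝ ![π b - π a, π c - π a] := by
    simpa only [map_sub] using linearIndependent_orthogonalProjection_prism_base htri hv hface
  have hw := hbase.mem_span_pair_of_finrank_eq_two (finrank_orthogonal_span_singleton_eq_two hd)
    (π v)
  rw [IsKGon, shadow_convexHull_prism]
  exact ncard_extremePoints_prism hbase hw (hside rfl) (hside (r := b) (pair_comm c b ▸ rfl))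
    (hside (r := a) (by rw [pair_comm c a, insert_comm b a]))
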